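/- arXiv:1705.07948 — 2 statements merged into one kernel-verified Lean document; each statement's English description precedes it below -/
import Mathlib

section
/- Let Ω ⊆ ℝⁿ be open, and let u_k : Ω → ℝᵐ be a sequence of viscosity solutions of the minimal surface system converging uniformly on every compact subset of Ω to a continuous map u : Ω → ℝᵐ. Then u is a viscosity solution of the minimal surface system. -/
open Set Metric MeasureTheory

noncomputable section

/-- Euclidean space `ℝ^n`. -/
abbrev Euc (n : ℕ) : Type := EuclideanSpace ℝ (Fin n)

/-- The point `X = (x, z)` of `ℝ^{n+m}`. -/
def pairPt (n m : ℕ) (x : Euc n) (z : Euc m) : Euc (n + m) :=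
  WithLp.toLp 2 (fun i => Fin.addCases (motive := fun _ => ℝ) (fun j => x j) (fun j => z j) i)

/-- The `x`-part of a point `X ∈ ℝ^{n+m}`. -/
def xPart (n m : ℕ) (X : Euc (n + m)) : Euc n := WithLp.toLp 2 (fun i => X (Fin.castAdd m i))

/-- The `z`-part of a point `X ∈ ℝ^{n+m}`. -/
def zPart (n m : ℕ) (X : Euc (n + m)) : Euc m := WithLp.toLp 2 (fun i => X (Fin.natAdd n i))

/-- `H` is a comparison function for the minimal surface system in `U ⊆ ℝ^{n+m}`:
`H` is `C²` on `U` and for every `X ∈ U` and every `n`-dimensional subspace `L`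
orthogonal to `∇H(X)` (i.e. contained in the kernel of `DH(X)`), the Laplacian of `H`
along `L`, computed with any orthonormal basis of `L`, is positive. -/
def IsComparison (n m : ℕ) (U : Set (Euc (n + m))) (H : Euc (n + m) → ℝ) : Prop :=
  ContDiffOn ℝ 2 H U ∧
    ∀ X ∈ U, ∀ L : Submodule ℝ (Euc (n + m)), Module.finrank ℝ L = n →
      (∀ v ∈ L, fderivWithin ℝ H U X v = 0) →
      ∀ e : Fin n → Euc (n + m), (∀ k, e k ∈ L) → Orthonormal ℝ e →
        0 < ∑ k, iteratedFDerivWithin ℝ 2 H U X ![e k, e k]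

/-- `Γ` is a viscosity minimal set in the open set `W ⊆ ℝ^{n+m}`: for every open `U ⊆ W`,
every comparison function `H` in `U` and every `c`, there is no point of `Γ ∩ U` where
`H = c` while `Γ ∩ U ⊆ {H ≤ c}`. -/
def IsViscosityMinimalSet (n m : ℕ) (W : Set (Euc (n + m))) (Γ : Set (Euc (n + m))) : Prop :=
  ∀ U : Set (Euc (n + m)), U ⊆ W → IsOpen U →
    ∀ H : Euc (n + m) → ℝ, IsComparison n m U H → ∀ c : ℝ,
      ¬ ∃ X₀ ∈ Γ ∩ U, H X₀ = c ∧ ∀ X ∈ Γ ∩ U, H X ≤ c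

/-- The graph `{(x, u x) : x ∈ Ω} ⊆ ℝ^{n+m}` of `u : Ω → ℝ^m`. -/
def graphSet (n m : ℕ) (Ω : Set (Euc n)) (u : Euc n → Euc m) : Set (Euc (n + m)) :=
  (fun x => pairPt n m x (u x)) '' Ω

/-- `u : Ω → ℝ^m` is a viscosity solution of the minimal surface system. -/
def IsViscositySolution (n m : ℕ) (Ω : Set (Euc n)) (u : Euc n → Euc m) : Prop :=
  ContinuousOn u Ω ∧ IsViscosityMinimalSet n m univ (graphSet n m Ω u)
/-- The area integrand `F(A) = √(det(Iₘ + AᵀA))` for an `n × m` matrix `A`. -/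
def msF (n m : ℕ) (A : Matrix (Fin n) (Fin m) ℝ) : ℝ :=
  Real.sqrt (1 + Matrix.transpose A * A).det

/-- The second partial derivative `F_{αi,βj}` of `F` with respect to the entries
`A_{iα}` and `A_{jβ}`. -/
def msF2 (n m : ℕ) (A : Matrix (Fin n) (Fin m) ℝ) (i j : Fin n) (α β : Fin m) : ℝ :=
  deriv (fun s : ℝ => deriv (fun t : ℝ =>
    msF n m (A + t • Matrix.single i α 1 + s • Matrix.single j β 1)) 0) 0

/-- The Jacobian matrix `Du(x) = (∂ᵢ u^α(x))`, computed within `Ω`. -/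
def gradMat (n m : ℕ) (Ω : Set (Euc n)) (u : Euc n → Euc m) (x : Euc n) :
    Matrix (Fin n) (Fin m) ℝ :=
  fun i α => fderivWithin ℝ u Ω x (EuclideanSpace.single i 1) α

/-- The second partial derivative `∂ᵢ∂ⱼ u (x)`, computed within `Ω`. -/
def secondPartial (n m : ℕ) (Ω : Set (Euc n)) (u : Euc n → Euc m) (x : Euc n)
    (i j : Fin n) : Euc m :=
  iteratedFDerivWithin ℝ 2 u Ω x ![EuclideanSpace.single i 1, EuclideanSpace.single j 1]

/-- `u` is a classical solution of the minimal surface system on `Ω`: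
`∑_{i,j,β} F_{αi,βj}(Du(x)) ∂ᵢ∂ⱼ u^β(x) = 0` for all `x ∈ Ω` and all `α`. -/
def IsClassicalSolution (n m : ℕ) (Ω : Set (Euc n)) (u : Euc n → Euc m) : Prop :=
  ∀ x ∈ Ω, ∀ α : Fin m,
    ∑ i, ∑ j, ∑ β, msF2 n m (gradMat n m Ω u x) i j α β *
      secondPartial n m Ω u x i j β = 0

/-- The maximal Pucci operator `M⁺_{λ,Λ}(N) = Λ·∑_{μᵢ>0} μᵢ + λ·∑_{μᵢ<0} μᵢ`
on symmetric matrices (where the `μᵢ` are the eigenvalues of `N`). -/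
def pucciPlus {n : ℕ} (lam Lam : ℝ) (N : Matrix (Fin n) (Fin n) ℝ) : ℝ :=
  if h : N.IsHermitian then
    ∑ i, (if 0 < h.eigenvalues i then Lam * h.eigenvalues i else lam * h.eigenvalues i)
  else 0

/-- The Hessian matrix `D²φ(x)` of a scalar function, computed within `s`. -/
def hessWithin (n : ℕ) (s : Set (Euc n)) (φ : Euc n → ℝ) (x : Euc n) :
    Matrix (Fin n) (Fin n) ℝ :=
  fun i j =>
    iteratedFDerivWithin ℝ 2 φ s x ![EuclideanSpace.single i 1, EuclideanSpace.single j 1]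

/-- `‖φ‖_{C^{1,1}} ≤ 1` on `s`: `|φ| ≤ 1`, `|Dφ| ≤ 1` and `|D²φ| ≤ 1` on `s`. -/
def C11Bound (n : ℕ) (s : Set (Euc n)) (φ : Euc n → ℝ) : Prop :=
  (∀ x ∈ s, |φ x| ≤ 1) ∧ (∀ x ∈ s, ‖fderivWithin ℝ φ s x‖ ≤ 1) ∧
    (∀ x ∈ s, ‖iteratedFDerivWithin ℝ 2 φ s x‖ ≤ 1)

/-- The Laplacian `Δf(x) = ∑ᵢ ∂ᵢᵢ f(x)` of a scalar function, computed within `s`. -/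
def lapWithin (n : ℕ) (s : Set (Euc n)) (f : Euc n → ℝ) (x : Euc n) : ℝ :=
  ∑ i, iteratedFDerivWithin ℝ 2 f s x
    ![EuclideanSpace.single i 1, EuclideanSpace.single i 1]

/-- `h : V → ℝ^m` is harmonic on `V`: it is `C²` and `Δh^α = 0` on `V` for each `α`. -/
def HarmonicOnE (n m : ℕ) (V : Set (Euc n)) (h : Euc n → Euc m) : Prop :=
  ContDiffOn ℝ 2 h V ∧ ∀ x ∈ V, ∀ α : Fin m,
    ∑ i, (iteratedFDerivWithin ℝ 2 h V x
      ![EuclideanSpace.single i 1, EuclideanSpace.single i 1]) α = 0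

/-- The quadratic polynomial map `q : ℝⁿ → ℝᵐ` with constant part `c`, linear part `B`
and quadratic part `Q`, i.e. `q^α(x) = c^α + ∑ᵢ Bᵢα xᵢ + ∑ᵢⱼ Qαᵢⱼ xᵢ xⱼ`. -/
def quadMap (n m : ℕ) (c : Euc m) (B : Matrix (Fin n) (Fin m) ℝ)
    (Q : Fin m → Matrix (Fin n) (Fin n) ℝ) (x : Euc n) : Euc m :=
  WithLp.toLp 2 (fun α => c α + ∑ i, B i α * x i + ∑ i, ∑ j, Q α i j * x i * x j)

/-- The quadratic polynomial with quadratic part `Q` is harmonic, i.e. each quadratic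
part has zero trace. -/
def QuadHarmonic (n m : ℕ) (Q : Fin m → Matrix (Fin n) (Fin n) ℝ) : Prop :=
  ∀ α, ∑ i, Q α i i = 0

/-- All coefficients of the quadratic polynomial with data `(c, B, Q)` are bounded by `K`. -/
def QuadCoeffBound (n m : ℕ) (c : Euc m) (B : Matrix (Fin n) (Fin m) ℝ)
    (Q : Fin m → Matrix (Fin n) (Fin n) ℝ) (K : ℝ) : Prop :=
  (∀ α, |c α| ≤ K) ∧ (∀ i α, |B i α| ≤ K) ∧ (∀ α i j, |Q α i j| ≤ K)

/-- The oscillation of `w` on `s`: the infimum of radii `ρ ≥ 0` such that the image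
`w(s)` is contained in some ball `B_ρ(z)` of `ℝᵐ`. -/
def oscOn (n m : ℕ) (s : Set (Euc n)) (w : Euc n → Euc m) : ℝ :=
  sInf {ρ : ℝ | 0 ≤ ρ ∧ ∃ z : Euc m, ∀ x ∈ s, w x ∈ ball z ρ}

/-!
Perturbing a comparison function `H` that touches the graph of `u` from above at `X₀` to
`H - ε ‖· - X₀‖²` makes the touching strict, and for small `ε` keeps it a comparison function
near `X₀`: the comparison condition is open, by compactness of the set of orthonormal frames.
By uniform convergence the perturbed function, restricted to the graph of `u k`, then attains
a local maximum near `X₀`, which the viscosity property of `u k` forbids.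
-/

open scoped RealInnerProductSpace

section NormSubSq
variable {E : Type*} [NormedAddCommGroup E] [InnerProductSpace ℝ E]

lemma fderiv_norm_sub_sq_apply (X₀ X v : E) :
    fderiv ℝ (fun Y => ‖Y - X₀‖ ^ 2) X v = 2 * ⟪X - X₀, v⟫ := by
  rw [fderiv_comp_sub (f := fun Y : E => ‖Y‖ ^ 2), fderiv_norm_sq_apply]
  simp [inner_sub_left]

lemma iteratedFDeriv_two_norm_sub_sq_apply (X₀ X v w : E) :
    iteratedFDeriv ℝ 2 (fun Y => ‖Y - X₀‖ ^ 2) X ![v, w] = 2 * ⟪v, w⟫ := by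
  simp_rw [sub_eq_add_neg, iteratedFDeriv_comp_add_right (f := fun Y : E => ‖Y‖ ^ 2),
    iteratedFDeriv_two_apply, fderiv_norm_sq, ← FunLike.coe_smul]
  rw [ContinuousLinearMap.fderiv]
  simp [innerSL_apply_apply ℝ]

variable {H : E → ℝ} {X : E}

lemma fderiv_sub_mul_norm_sub_sq_apply (hH : DifferentiableAt ℝ H X) (ε : ℝ) (X₀ v : E) :
    fderiv ℝ (fun Y => H Y - ε * ‖Y - X₀‖ ^ 2) X v = fderiv ℝ H X v - ε * (2 * ⟪X - X₀, v⟫) := by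
  have hq : DifferentiableAt ℝ (fun Y => ‖Y - X₀‖ ^ 2) X :=
    (differentiableAt_id.sub_const X₀).norm_sq ℝ
  rw [fderiv_fun_sub hH (hq.const_mul ε), fderiv_const_mul hq]
  simp [fderiv_norm_sub_sq_apply]

lemma iteratedFDeriv_two_sub_mul_norm_sub_sq_apply (hH : ContDiffAt ℝ 2 H X) (ε : ℝ)
    (X₀ v w : E) :
    iteratedFDeriv ℝ 2 (fun Y => H Y - ε * ‖Y - X₀‖ ^ 2) X ![v, w]
      = iteratedFDeriv ℝ 2 H X ![v, w] - ε * (2 * ⟪v, w⟫) := by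
  have hq : ContDiff ℝ 2 (fun Y => ‖Y - X₀‖ ^ 2) := (contDiff_id.sub contDiff_const).norm_sq ℝ
  rw [show (fun Y => H Y - ε * ‖Y - X₀‖ ^ 2) = H - ε • fun Y => ‖Y - X₀‖ ^ 2 from rfl,
    iteratedFDeriv_sub_apply (g := ε • fun Y => ‖Y - X₀‖ ^ 2) hH (hq.const_smul ε).contDiffAt,
    iteratedFDeriv_const_smul_apply hq.contDiffAt]
  simp [iteratedFDeriv_two_norm_sub_sq_apply]

end NormSubSq

lemma isCompact_setOf_orthonormal {ι E : Type*} [Fintype ι] [NormedAddCommGroup E]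
    [InnerProductSpace ℝ E] [ProperSpace E] : IsCompact {e : ι → E | Orthonormal ℝ e} := by
  refine (isCompact_univ_pi fun _ => isCompact_closedBall (0 : E) 1).of_isClosed_subset ?_
    fun e he i _ => by simp [he.1 i]
  classical
  simp_rw [orthonormal_iff_ite, ofPred_forall]
  exact isClosed_iInter fun i => isClosed_iInter fun j =>
    isClosed_eq ((continuous_apply i).inner (continuous_apply j)) continuous_const

lemma exists_isMaxOn_ball_of_approx {α : Type*} [MetricSpace α] [ProperSpace α] {f : α → ℝ}
    {X₀ : α} {ρ κ : ℝ} {Γ : Set α} (hf : ContinuousOn f (closedBall X₀ ρ)) (hρ : 0 < ρ)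
    (hκ : 0 < κ) (hΓ : ∀ Y ∈ Γ ∩ closedBall X₀ ρ, ρ / 4 ≤ dist Y X₀ → f Y + κ ≤ f X₀) :
    ∃ σ > 0, ∀ Γ' : Set α, IsCompact (Γ' ∩ closedBall X₀ (ρ / 2)) →
      (∃ Y' ∈ Γ', dist Y' X₀ < σ) → (∀ Y' ∈ Γ' ∩ closedBall X₀ (ρ / 2), ∃ Y ∈ Γ, dist Y' Y < σ) →
      ∃ a ∈ Γ' ∩ ball X₀ (ρ / 2), IsMaxOn f (Γ' ∩ ball X₀ (ρ / 2)) a := by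
  obtain ⟨σ₀, hσ₀, hunif⟩ := Metric.uniformContinuousOn_iff.mp
    ((isCompact_closedBall X₀ ρ).uniformContinuousOn_of_continuous hf) (κ / 2) (by positivity)
  refine ⟨min σ₀ (ρ / 4), by positivity, fun Γ' hcpt ⟨Y₀', hY₀'Γ', hY₀'⟩ happrox => ?_⟩
  have hσσ₀ : min σ₀ (ρ / 4) ≤ σ₀ := min_le_left _ _
  have hσρ : min σ₀ (ρ / 4) ≤ ρ / 4 := min_le_right _ _
  have hX₀ : X₀ ∈ closedBall X₀ ρ := mem_closedBall_self hρ.le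
  have hSρ : Γ' ∩ closedBall X₀ (ρ / 2) ⊆ closedBall X₀ ρ :=
    inter_subset_right.trans (closedBall_subset_closedBall (by linarith))
  have hY₀'S : Y₀' ∈ Γ' ∩ closedBall X₀ (ρ / 2) := ⟨hY₀'Γ', by
    rw [mem_closedBall]; linarith⟩
  obtain ⟨a, haS, hamax⟩ := hcpt.exists_isMaxOn ⟨Y₀', hY₀'S⟩ (hf.mono hSρ)
  have hcenter : f X₀ - κ / 2 < f a := by
    have := hunif Y₀' (hSρ hY₀'S) X₀ hX₀ (by linarith)
    rw [Real.dist_eq, abs_lt] at this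
    linarith [isMaxOn_iff.mp hamax Y₀' hY₀'S]
  have ha : dist a X₀ < ρ / 2 := by
    by_contra! hfar
    obtain ⟨Y, hYΓ, hY⟩ := happrox a haS
    have hYρ : dist Y X₀ ≤ ρ := by
      linarith [dist_triangle Y a X₀, dist_comm Y a, mem_closedBall.mp haS.2]
    have hYfar : ρ / 4 ≤ dist Y X₀ := by linarith [dist_triangle a Y X₀]
    have hfY := hΓ Y ⟨hYΓ, hYρ⟩ hYfar
    have := hunif a (hSρ haS) Y hYρ (by linarith)
    rw [Real.dist_eq, abs_lt] at this
    linarith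
  exact ⟨a, ⟨haS.1, ha⟩, hamax.on_subset fun Y hY => ⟨hY.1, ball_subset_closedBall hY.2⟩⟩

section Graph
variable {n m : ℕ}

lemma pairPt_eq_finAddEquivProd_symm (x : Euc n) (z : Euc m) :
    pairPt n m x z = EuclideanSpace.finAddEquivProd.symm (x, z) := by
  ext i
  refine Fin.addCases (fun j => ?_) (fun j => ?_) i <;> simp [pairPt]

lemma continuous_pairPt : Continuous fun p : Euc n × Euc m => pairPt n m p.1 p.2 := by
  simp only [pairPt_eq_finAddEquivProd_symm]
  exact EuclideanSpace.finAddEquivProd.symm.continuous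

lemma pairPt_sub_pairPt (x x' : Euc n) (z z' : Euc m) :
    pairPt n m x z - pairPt n m x' z' = pairPt n m (x - x') (z - z') := by
  simp only [pairPt_eq_finAddEquivProd_symm, ← map_sub, Prod.mk_sub_mk]

lemma norm_pairPt_sq (x : Euc n) (z : Euc m) :
    ‖pairPt n m x z‖ ^ 2 = ‖x‖ ^ 2 + ‖z‖ ^ 2 := by
  simp only [EuclideanSpace.norm_sq_eq, Fin.sum_univ_add, pairPt]
  simp

lemma dist_le_dist_pairPt (x x' : Euc n) (z z' : Euc m) :
    dist x x' ≤ dist (pairPt n m x z) (pairPt n m x' z') := by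
  simp only [dist_eq_norm, pairPt_sub_pairPt]
  refine le_of_sq_le_sq ?_ (norm_nonneg _)
  rw [norm_pairPt_sq]
  nlinarith [sq_nonneg ‖z - z'‖]

lemma dist_pairPt_pairPt_left (x : Euc n) (z z' : Euc m) :
    dist (pairPt n m x z) (pairPt n m x z') = dist z z' := by
  simp only [dist_eq_norm, pairPt_sub_pairPt]
  refine (sq_eq_sq₀ (norm_nonneg _) (norm_nonneg _)).mp ?_
  simp [norm_pairPt_sq]

lemma isCompact_graphSet_inter_closedBall {Ω : Set (Euc n)} {v : Euc n → Euc m}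
    (hv : ContinuousOn v Ω) {x₀ : Euc n} {z₀ : Euc m} {ρ : ℝ} (hρ : closedBall x₀ ρ ⊆ Ω) :
    IsCompact (graphSet n m Ω v ∩ closedBall (pairPt n m x₀ z₀) ρ) := by
  have hgraph : graphSet n m Ω v ∩ closedBall (pairPt n m x₀ z₀) ρ =
      (fun x => pairPt n m x (v x)) '' closedBall x₀ ρ ∩ closedBall (pairPt n m x₀ z₀) ρ := by
    ext X
    constructor
    · rintro ⟨⟨x, -, rfl⟩, hX⟩
      exact ⟨⟨x, (dist_le_dist_pairPt x x₀ (v x) z₀).trans hX, rfl⟩, hX⟩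
    · rintro ⟨⟨x, hx, rfl⟩, hX⟩
      exact ⟨⟨x, hρ hx, rfl⟩, hX⟩
  rw [hgraph]
  exact ((isCompact_closedBall x₀ ρ).image_of_continuousOn (continuous_pairPt.comp_continuousOn
    (continuousOn_id.prodMk (hv.mono hρ)))).inter_right isClosed_closedBall

lemma exists_mem_graphSet_dist_lt {Ω : Set (Euc n)} {v w : Euc n → Euc m} {x₀ : Euc n}
    {z₀ : Euc m} {ρ σ : ℝ} (hvw : ∀ x ∈ closedBall x₀ ρ, dist (v x) (w x) < σ) :
    ∀ Y' ∈ graphSet n m Ω w ∩ closedBall (pairPt n m x₀ z₀) ρ,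
      ∃ Y ∈ graphSet n m Ω v, dist Y' Y < σ := by
  rintro _ ⟨⟨x, hx, rfl⟩, hY'⟩
  refine ⟨pairPt n m x (v x), ⟨x, hx, rfl⟩, ?_⟩
  rw [dist_pairPt_pairPt_left, dist_comm]
  exact hvw x ((dist_le_dist_pairPt x x₀ (w x) z₀).trans hY')

end Graph

section Comparison
variable {n m : ℕ} {U : Set (Euc (n + m))} {H : Euc (n + m) → ℝ}

lemma isComparison_iff_of_isOpen (hU : IsOpen U) :
    IsComparison n m U H ↔ ContDiffOn ℝ 2 H U ∧
      ∀ X ∈ U, ∀ e : Fin n → Euc (n + m), Orthonormal ℝ e → (∀ k, fderiv ℝ H X (e k) = 0) →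
        0 < ∑ k, iteratedFDeriv ℝ 2 H X ![e k, e k] := by
  refine and_congr_right fun _ => forall₂_congr fun X hX => ?_
  simp only [fderivWithin_of_isOpen hU hX, iteratedFDerivWithin_of_isOpen 2 hU hX]
  constructor
  · intro h e he hker
    refine h (Submodule.span ℝ (range e)) ?_ (fun v hv => ?_) e
      (fun k => Submodule.subset_span (mem_range_self k)) he
    · rw [finrank_span_eq_card he.linearIndependent, Fintype.card_fin]
    · have hrange : range e ⊆ LinearMap.ker (fderiv ℝ H X : Euc (n + m) →ₗ[ℝ] ℝ) := by
        rintro _ ⟨k, rfl⟩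
        exact hker k
      exact Submodule.span_le.mpr hrange hv
  · intro h L _ hL e heL he
    exact h e he fun k => hL (e k) (heL k)

lemma IsComparison.mono (hH : IsComparison n m U H) (hU : IsOpen U) {V : Set (Euc (n + m))}
    (hV : IsOpen V) (hVU : V ⊆ U) : IsComparison n m V H := by
  rw [isComparison_iff_of_isOpen hU] at hH
  rw [isComparison_iff_of_isOpen hV]
  exact ⟨hH.1.mono hVU, fun X hX => hH.2 X (hVU hX)⟩

lemma IsComparison.exists_pos_of_isCompact (hH : IsComparison n m U H) (hU : IsOpen U)
    {K : Set (Euc (n + m))} (hK : IsCompact K) (hKU : K ⊆ U) :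
    ∃ μ > 0, ∀ X ∈ K, ∀ e : Fin n → Euc (n + m), Orthonormal ℝ e →
      ∑ k, |fderiv ℝ H X (e k)| < μ → μ ≤ ∑ k, iteratedFDeriv ℝ 2 H X ![e k, e k] := by
  rw [isComparison_iff_of_isOpen hU] at hH
  obtain ⟨hC2, hpos⟩ := hH
  set C := K ×ˢ {e : Fin n → Euc (n + m) | Orthonormal ℝ e}
  have hD : ContinuousOn (fderiv ℝ H) U := hC2.continuousOn_fderiv_of_isOpen hU one_le_two
  have hD2 : ContinuousOn (fderiv ℝ (fderiv ℝ H)) U :=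
    (hC2.fderiv_of_isOpen hU (by norm_num)).continuousOn_fderiv_of_isOpen hU le_rfl
  have hfst : MapsTo Prod.fst C U := fun p hp => hKU hp.1
  have hframe : ∀ k, ContinuousOn (fun p : Euc (n + m) × (Fin n → Euc (n + m)) => p.2 k) C :=
    fun k => ((continuous_apply k).comp continuous_snd).continuousOn
  have hcont : ContinuousOn (fun p : Euc (n + m) × (Fin n → Euc (n + m)) =>
      max (∑ k, |fderiv ℝ H p.1 (p.2 k)|) (∑ k, iteratedFDeriv ℝ 2 H p.1 ![p.2 k, p.2 k])) C := by
    simp only [iteratedFDeriv_two_apply, Matrix.cons_val_zero, Matrix.cons_val_one]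
    refine ContinuousOn.sup (continuousOn_finsetSum _ fun k _ => ?_)
      (continuousOn_finsetSum _ fun k _ => ?_)
    · exact ((hD.comp continuousOn_fst hfst).clm_apply (hframe k)).abs
    · exact ((hD2.comp continuousOn_fst hfst).clm_apply (hframe k)).clm_apply (hframe k)
  have hmax_pos : ∀ p ∈ C, (0 : ℝ) <
      max (∑ k, |fderiv ℝ H p.1 (p.2 k)|) (∑ k, iteratedFDeriv ℝ 2 H p.1 ![p.2 k, p.2 k]) := by
    rintro ⟨X, e⟩ ⟨hX, he⟩
    rcases (Finset.sum_nonneg fun k _ => abs_nonneg (fderiv ℝ H X (e k))).lt_or_eq with h | h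
    · exact lt_max_of_lt_left h
    · refine lt_max_of_lt_right (hpos X (hKU hX) e he fun k => ?_)
      exact abs_eq_zero.mp ((Finset.sum_eq_zero_iff_of_nonneg fun k _ => abs_nonneg _).mp h.symm
        k (Finset.mem_univ k))
  obtain ⟨μ, hμ, hμle⟩ := (hK.prod isCompact_setOf_orthonormal).exists_forall_le' hcont hmax_pos
  exact ⟨μ, hμ, fun X hX e he hsmall =>
    (le_max_iff.mp (hμle (X, e) ⟨hX, he⟩)).resolve_left hsmall.not_ge⟩

lemma IsComparison.exists_sub_mul_norm_sub_sq (hH : IsComparison n m U H) (hU : IsOpen U)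
    {X₀ : Euc (n + m)} {ρ : ℝ} (hρU : closedBall X₀ ρ ⊆ U) :
    ∃ ε > 0, IsComparison n m (ball X₀ ρ) (fun Y => H Y - ε * ‖Y - X₀‖ ^ 2) := by
  obtain ⟨μ, hμ, hμle⟩ := hH.exists_pos_of_isCompact hU (isCompact_closedBall X₀ ρ) hρU
  -- `ε` pays for the first-order error `2 ε ‖X - X₀‖` and the second-order cost `2 ε` per
  -- frame vector
  obtain ⟨ε, hε, hεμ⟩ := exists_pos_mul_lt hμ (2 * n * (|ρ| + 1))
  rw [isComparison_iff_of_isOpen hU] at hH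
  have hq : ContDiff ℝ 2 (fun Y : Euc (n + m) => ‖Y - X₀‖ ^ 2) :=
    (contDiff_id.sub contDiff_const).norm_sq ℝ
  refine ⟨ε, hε, (isComparison_iff_of_isOpen isOpen_ball).mpr
    ⟨(hH.1.mono (ball_subset_closedBall.trans hρU)).sub (contDiffOn_const.mul hq.contDiffOn),
      fun X hX e he hker => ?_⟩⟩
  have hXU : X ∈ U := hρU (ball_subset_closedBall hX)
  have hHX : ContDiffAt ℝ 2 H X := hH.1.contDiffAt (hU.mem_nhds hXU)
  have hkernel : ∀ k, fderiv ℝ H X (e k) = ε * (2 * ⟪X - X₀, e k⟫) := fun k => sub_eq_zero.mp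
    ((fderiv_sub_mul_norm_sub_sq_apply (hHX.differentiableAt two_ne_zero) ε X₀ (e k)).symm.trans
      (hker k))
  have hgrad : ∑ k, |fderiv ℝ H X (e k)| < μ := calc
    ∑ k, |fderiv ℝ H X (e k)| ≤ ∑ _k : Fin n, 2 * ε * (|ρ| + 1) := by
      refine Finset.sum_le_sum fun k _ => ?_
      have hinner := abs_real_inner_le_norm (X - X₀) (e k)
      rw [he.1 k, mul_one] at hinner
      have hdist : ‖X - X₀‖ < ρ := mem_ball_iff_norm.mp hX
      rw [hkernel k, abs_mul, abs_of_pos hε, abs_mul, abs_two]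
      nlinarith [le_abs_self ρ]
    _ = 2 * n * (|ρ| + 1) * ε := by simp; ring
    _ < μ := hεμ
  have hlap : ∑ k, iteratedFDeriv ℝ 2 (fun Y => H Y - ε * ‖Y - X₀‖ ^ 2) X ![e k, e k]
      = ∑ k, iteratedFDeriv ℝ 2 H X ![e k, e k] - 2 * n * ε := by
    simp [iteratedFDeriv_two_sub_mul_norm_sub_sq_apply hHX, he.1, Finset.sum_sub_distrib]
    ring
  rw [hlap]
  nlinarith [hμle X (ball_subset_closedBall hX) e he hgrad, abs_nonneg ρ]

end Comparison

/-- **Stability.** If viscosity solutions `u k` of the minimal surface system on an open set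
`Ω ⊆ ℝⁿ` converge uniformly on every compact subset of `Ω` to a continuous map `u`, then
`u` is a viscosity solution as well. -/
theorem viscosity_stability (n m : ℕ) (Ω : Set (Euc n)) (hΩ : IsOpen Ω)
    (uk : ℕ → Euc n → Euc m) (huk : ∀ k, IsViscositySolution n m Ω (uk k))
    (u : Euc n → Euc m) (hu : ContinuousOn u Ω)
    (hconv : ∀ K : Set (Euc n), K ⊆ Ω → IsCompact K →
      TendstoUniformlyOn uk u Filter.atTop K) :
    IsViscositySolution n m Ω u := by
  refine ⟨hu, ?_⟩
  rintro U - hU H hH c ⟨_, ⟨⟨x₀, hx₀, rfl⟩, hX₀U⟩, rfl, hmax⟩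
  beta_reduce at hX₀U hmax
  set X₀ := pairPt n m x₀ (u x₀)
  obtain ⟨ρ, hρ, hρU, hρΩ⟩ : ∃ ρ > 0, closedBall X₀ ρ ⊆ U ∧ closedBall x₀ ρ ⊆ Ω := by
    obtain ⟨r, hr, hrU⟩ := nhds_basis_closedBall.mem_iff.mp (hU.mem_nhds hX₀U)
    obtain ⟨s, hs, hsΩ⟩ := nhds_basis_closedBall.mem_iff.mp (hΩ.mem_nhds hx₀)
    exact ⟨min r s, lt_min hr hs, (closedBall_subset_closedBall (min_le_left r s)).trans hrU,
      (closedBall_subset_closedBall (min_le_right r s)).trans hsΩ⟩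
  have hhalf : closedBall x₀ (ρ / 2) ⊆ Ω := (closedBall_subset_closedBall (by linarith)).trans hρΩ
  obtain ⟨ε, hε, hcomp⟩ := hH.exists_sub_mul_norm_sub_sq hU hρU
  set H' := fun Y => H Y - ε * ‖Y - X₀‖ ^ 2
  have hstrict : ∀ Y ∈ graphSet n m Ω u ∩ closedBall X₀ ρ, ρ / 4 ≤ dist Y X₀ →
      H' Y + ε * (ρ / 4) ^ 2 ≤ H' X₀ := by
    intro Y hY hYfar
    have := hmax Y ⟨hY.1, hρU hY.2⟩
    simp only [H', ← dist_eq_norm, dist_self]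
    nlinarith [mul_le_mul_of_nonneg_left (pow_le_pow_left₀ (by positivity) hYfar 2) hε.le]
  obtain ⟨σ, hσ, happrox⟩ := exists_isMaxOn_ball_of_approx
    ((hH.1.continuousOn.mono hρU).sub (by fun_prop)) hρ (by positivity) hstrict
  obtain ⟨k, hk⟩ := (Metric.tendstoUniformlyOn_iff.mp
    (hconv _ hhalf (isCompact_closedBall x₀ (ρ / 2))) σ hσ).exists
  obtain ⟨a, ha, hamax⟩ := happrox (graphSet n m Ω (uk k))
    (isCompact_graphSet_inter_closedBall (huk k).1 hhalf)
    ⟨pairPt n m x₀ (uk k x₀), ⟨x₀, hx₀, rfl⟩, by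
      rw [dist_pairPt_pairPt_left, dist_comm]
      exact hk x₀ (mem_closedBall_self (by positivity))⟩
    (exists_mem_graphSet_dist_lt hk)
  exact (huk k).2 (ball X₀ (ρ / 2)) (subset_univ _) isOpen_ball H'
    (hcomp.mono isOpen_ball isOpen_ball (ball_subset_ball (by linarith))) (H' a)
    ⟨a, ha, rfl, fun X hX => hamax hX⟩
end
end

section
/- Let n, m ≥ 1 and K > 0. There exist constants c₀ > 0 and ε₀ > 0, depending only on n, m and K, with the following property. Let l(x) = b + Ax be an affine map from ℝⁿ to ℝᵐ with |A| ≤ K, let 0 < ε ≤ ε₀, and let φ : B₁ⁿ → ℝ be a C² function with ‖φ‖_{C^{1,1}} ≤ 1 and M⁺_{c₀,1}(D²φ(x)) < 0 for all x ∈ B₁ⁿ. Then the function H(x,z) := |z − l(x)| − εφ(x) is a comparison function for the minimal surface system in the open set {(x,z) : x ∈ B₁ⁿ, 0 < |z − l(x)| < ε}. -/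
open Set Metric MeasureTheory

noncomputable section

/-!
Write `w = z - l(x)`, `r = |w|`, `T(x, z) = z - A x`, `π(x, z) = x`, and let `e₁, …, eₙ` be an
orthonormal basis of `L`. Along `L` the second derivative of `H` is
`∑ₖ (r² |T eₖ|² - ⟪w, T eₖ⟫²) / r³ - ε ∑ₖ D²φ(π eₖ, π eₖ)`, whose first part is nonnegative by
Cauchy–Schwarz. Put `σ = ∑ₖ |T eₖ|²`.

If `σ ≤ 1/4`, then `L` is nearly horizontal: `π` maps `L` onto `ℝⁿ` with an inverse of norm at most
`2 √(1 + K²)`, so the vectors `π eₖ` satisfy `c₀ |u|² ≤ ∑ₖ ⟪u, π eₖ⟫² ≤ |u|²` with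
`c₀ = 1 / (4 (1 + K²))`, and then `∑ₖ D²φ(π eₖ, π eₖ) ≤ M⁺_{c₀,1}(D²φ) < 0`.

If `σ > 1/4`, orthogonality of `L` to `∇H` gives `⟪w, T eₖ⟫ = r ε Dφ(π eₖ)`, so the first part is
at least `(σ - n ε²) / r > (σ - n ε²) / ε`, which dominates the contribution `n ε` of `φ` as soon as
`ε ≤ 1 / (8 (n + 1))`.
-/

open RealInnerProductSpace Topology

section NormCalculus

variable {F : Type*} [NormedAddCommGroup F] [InnerProductSpace ℝ F]

theorem hasFDerivAt_norm {w : F} (hw : w ≠ 0) :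
    HasFDerivAt (fun y : F => ‖y‖) (‖w‖⁻¹ • innerSL ℝ w) w := by
  have hsq : ‖w‖ ^ 2 ≠ 0 := by positivity
  convert ((hasStrictFDerivAt_norm_sq w).hasFDerivAt.sqrt hsq) using 1
  · simp [Real.sqrt_sq (norm_nonneg _)]
  · ext v
    simp only [smul_apply, coe_innerSL_apply, smul_eq_mul, Real.sqrt_sq (norm_nonneg _),
      nsmul_eq_mul, Nat.cast_ofNat]
    field_simp

theorem iteratedFDeriv_two_norm_apply {w : F} (hw : w ≠ 0) (v : F) :
    iteratedFDeriv ℝ 2 (fun y : F => ‖y‖) w ![v, v] =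
      (‖w‖ ^ 2 * ‖v‖ ^ 2 - ⟪w, v⟫ ^ 2) / ‖w‖ ^ 3 := by
  have hderiv : (fderiv ℝ fun y : F => ‖y‖) =ᶠ[𝓝 w] fun y => ‖y‖⁻¹ • innerSL ℝ y := by
    filter_upwards [isOpen_ne.mem_nhds hw] with y hy
    exact (hasFDerivAt_norm hy).fderiv
  have hinv : HasFDerivAt (fun y : F => ‖y‖⁻¹) (-(‖w‖ ^ 2)⁻¹ • (‖w‖⁻¹ • innerSL ℝ w)) w :=
    (hasDerivAt_inv (norm_ne_zero_iff.mpr hw)).comp_hasFDerivAt w (hasFDerivAt_norm hw)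
  have h2 : HasFDerivAt (fun y : F => ‖y‖⁻¹ • innerSL ℝ y) _ w :=
    hinv.smul (innerSL ℝ (E := F)).hasFDerivAt
  rw [iteratedFDeriv_two_apply, Filter.EventuallyEq.fderiv_eq hderiv, h2.fderiv]
  have hw' : ‖w‖ ≠ 0 := norm_ne_zero_iff.mpr hw
  simp only [Matrix.cons_val_zero, Matrix.cons_val_one, Matrix.cons_val_fin_one, add_apply,
    smul_apply, ContinuousLinearMap.smulRight_apply, coe_innerSL_apply, smul_eq_mul]
  rw [innerSL_apply_apply, real_inner_self_eq_norm_sq]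
  field_simp
  ring

end NormCalculus

theorem ContinuousLinearMap.iteratedFDeriv_comp_right_of_isOpen {𝕜 E F G : Type*}
    [NontriviallyNormedField 𝕜] [NormedAddCommGroup E] [NormedSpace 𝕜 E]
    [NormedAddCommGroup F] [NormedSpace 𝕜 F] [NormedAddCommGroup G] [NormedSpace 𝕜 G]
    {n : WithTop ℕ∞} {f : E → F} {s : Set E} (g : G →L[𝕜] E) (hs : IsOpen s)
    (hf : ContDiffOn 𝕜 n f s) {x : G} (hx : g x ∈ s) {i : ℕ} (hi : i ≤ n) :
    iteratedFDeriv 𝕜 i (f ∘ g) x =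
      (iteratedFDeriv 𝕜 i f (g x)).compContinuousLinearMap fun _ => g := by
  have hs' : IsOpen (g ⁻¹' s) := hs.preimage g.continuous
  rw [← iteratedFDerivWithin_of_isOpen i hs' hx, ← iteratedFDerivWithin_of_isOpen i hs hx]
  exact g.iteratedFDerivWithin_comp_right hf hs.uniqueDiffOn hs'.uniqueDiffOn hx hi

theorem comp_vecCons_two {α β : Type*} (f : α → β) (a a' : α) :
    (fun i => f (![a, a'] i)) = ![f a, f a'] :=
  (FinVec.map_eq f ![a, a']).symm

section NormAffineSubComp

variable {E F G : Type*} [NormedAddCommGroup E] [NormedSpace ℝ E] [NormedAddCommGroup F]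
  [InnerProductSpace ℝ F] [NormedAddCommGroup G] [NormedSpace ℝ G]
  {T : E →L[ℝ] F} {P : E →L[ℝ] G} {b : F} {ε : ℝ} {φ : G → ℝ} {s : Set G} {X : E}

theorem isOpen_setOf_norm_affine_sub_pos_lt (hs : IsOpen s) :
    IsOpen {Y | P Y ∈ s ∧ 0 < ‖T Y - b‖ ∧ ‖T Y - b‖ < ε} := by
  have hT : Continuous fun Y => ‖T Y - b‖ := (T.continuous.sub continuous_const).norm
  exact (hs.preimage P.continuous).inter
    ((isOpen_lt continuous_const hT).inter (isOpen_lt hT continuous_const))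

theorem contDiffAt_norm_affine_sub_comp (hs : IsOpen s) (hφ : ContDiffOn ℝ 2 φ s)
    (hb : T X - b ≠ 0) (hX : P X ∈ s) :
    ContDiffAt ℝ 2 (fun Y => ‖T Y - b‖ - ε * φ (P Y)) X :=
  ((contDiffAt_norm ℝ hb).comp X (T.contDiff.sub contDiff_const).contDiffAt).sub
    (contDiffAt_const.mul ((hφ.contDiffAt (hs.mem_nhds hX)).comp X P.contDiff.contDiffAt))

theorem fderiv_norm_affine_sub_comp_apply (hs : IsOpen s) (hφ : ContDiffOn ℝ 2 φ s)
    (hb : T X - b ≠ 0) (hX : P X ∈ s) (v : E) :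
    fderiv ℝ (fun Y => ‖T Y - b‖ - ε * φ (P Y)) X v =
      ‖T X - b‖⁻¹ * ⟪T X - b, T v⟫ - ε * fderiv ℝ φ (P X) (P v) := by
  have hφX : DifferentiableAt ℝ φ (P X) :=
    (hφ.contDiffAt (hs.mem_nhds hX)).differentiableAt (by norm_num)
  have hnorm := (hasFDerivAt_norm hb).comp X (T.hasFDerivAt.sub_const b)
  have hφP := (hφX.hasFDerivAt.comp X P.hasFDerivAt).const_mul ε
  have hH : HasFDerivAt (fun Y => ‖T Y - b‖ - ε * φ (P Y)) _ X := hnorm.sub hφP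
  rw [hH.fderiv]
  simp [inner_sub_left]

theorem iteratedFDeriv_two_norm_affine_sub_comp_apply (hs : IsOpen s) (hφ : ContDiffOn ℝ 2 φ s)
    (hb : T X - b ≠ 0) (hX : P X ∈ s) (v : E) :
    iteratedFDeriv ℝ 2 (fun Y => ‖T Y - b‖ - ε * φ (P Y)) X ![v, v] =
      (‖T X - b‖ ^ 2 * ‖T v‖ ^ 2 - ⟪T X - b, T v⟫ ^ 2) / ‖T X - b‖ ^ 3 -
        ε * iteratedFDeriv ℝ 2 φ (P X) ![P v, P v] := by
  have hnorm : ContDiffOn ℝ 2 (fun y : F => ‖y - b‖) {y | y - b ≠ 0} := fun y hy =>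
    ((contDiffAt_norm ℝ hy).comp y (contDiffAt_id.sub contDiffAt_const)).contDiffWithinAt
  have hopen : IsOpen {y : F | y - b ≠ 0} := isOpen_ne.preimage (continuous_sub_right b)
  have hφX := hφ.contDiffAt (hs.mem_nhds hX)
  have h1 : iteratedFDeriv ℝ 2 (fun Y => ‖T Y - b‖) X ![v, v] =
      (‖T X - b‖ ^ 2 * ‖T v‖ ^ 2 - ⟪T X - b, T v⟫ ^ 2) / ‖T X - b‖ ^ 3 := by
    rw [← Function.comp_def (fun y => ‖y - b‖) T,
      T.iteratedFDeriv_comp_right_of_isOpen hopen hnorm hb le_rfl]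
    simp only [ContinuousMultilinearMap.compContinuousLinearMap_apply, iteratedFDeriv_comp_sub,
      comp_vecCons_two, iteratedFDeriv_two_norm_apply hb]
  have h2 : iteratedFDeriv ℝ 2 (fun Y => ε * φ (P Y)) X ![v, v] =
      ε * iteratedFDeriv ℝ 2 φ (P X) ![P v, P v] := by
    simp_rw [← smul_eq_mul, ← Function.comp_apply (f := φ) (g := P)]
    rw [iteratedFDeriv_const_smul_apply' (hφX.comp X P.contDiff.contDiffAt),
      P.iteratedFDeriv_comp_right_of_isOpen hs hφ hX le_rfl, smul_apply, ContinuousMultilinearMap.compContinuousLinearMap_apply,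
      comp_vecCons_two, smul_eq_mul]
  rw [fun_iteratedFDeriv_sub_apply (f := fun Y => ‖T Y - b‖) (g := fun Y => ε * φ (P Y))
      ((hnorm.contDiffAt (hopen.mem_nhds hb)).comp X T.contDiff.contDiffAt)
      (contDiffAt_const.mul (hφX.comp X P.contDiff.contDiffAt)), sub_apply, h1, h2]

theorem inner_eq_of_fderiv_norm_affine_sub_comp_eq_zero (hs : IsOpen s) (hφ : ContDiffOn ℝ 2 φ s)
    (hb : T X - b ≠ 0) (hX : P X ∈ s) {v : E}
    (hv : fderiv ℝ (fun Y => ‖T Y - b‖ - ε * φ (P Y)) X v = 0) :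
    ⟪T X - b, T v⟫ = ‖T X - b‖ * (ε * fderiv ℝ φ (P X) (P v)) := by
  rw [fderiv_norm_affine_sub_comp_apply hs hφ hb hX, sub_eq_zero] at hv
  rw [← hv]
  field_simp

end NormAffineSubComp

section Orthonormal

variable {ι E : Type*} [Fintype ι] [NormedAddCommGroup E] [InnerProductSpace ℝ E] {e : ι → E}

theorem Orthonormal.norm_sq_apply_le_of_mem_span {F : Type*} [NormedAddCommGroup F]
    [NormedSpace ℝ F] (he : Orthonormal ℝ e) (f : E →ₗ[ℝ] F) {y : E}
    (hy : y ∈ Submodule.span ℝ (range e)) :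
    ‖f y‖ ^ 2 ≤ (∑ i, ‖f (e i)‖ ^ 2) * ‖y‖ ^ 2 := by
  obtain ⟨c, rfl⟩ := (Submodule.mem_span_range_iff_exists_fun ℝ).mp hy
  have hnorm : ‖∑ i, c i • e i‖ ^ 2 = ∑ i, c i ^ 2 := by
    rw [← real_inner_self_eq_norm_sq, sum_inner]
    simp_rw [real_inner_smul_left, he.inner_right_fintype, sq]
  have hle : ‖f (∑ i, c i • e i)‖ ≤ ∑ i, |c i| * ‖f (e i)‖ := by
    simp only [map_sum, map_smul]
    exact (norm_sum_le _ _).trans_eq (by simp [norm_smul])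
  calc ‖f (∑ i, c i • e i)‖ ^ 2 ≤ (∑ i, |c i| * ‖f (e i)‖) ^ 2 := by gcongr
    _ ≤ (∑ i, |c i| ^ 2) * ∑ i, ‖f (e i)‖ ^ 2 := Finset.sum_mul_sq_le_sq_mul_sq _ _ _
    _ = (∑ i, ‖f (e i)‖ ^ 2) * ‖∑ i, c i • e i‖ ^ 2 := by simp_rw [hnorm, sq_abs, mul_comm]

theorem Orthonormal.sum_sq_apply_le_norm_sq [CompleteSpace E] (he : Orthonormal ℝ e)
    (f : E →L[ℝ] ℝ) : ∑ i, f (e i) ^ 2 ≤ ‖f‖ ^ 2 := by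
  set a := (InnerProductSpace.toDual ℝ E).symm f
  calc ∑ i, f (e i) ^ 2 = ∑ i, ‖⟪e i, a⟫‖ ^ 2 := Finset.sum_congr rfl fun i _ => by
        rw [Real.norm_eq_abs, sq_abs, real_inner_comm, InnerProductSpace.toDual_symm_apply]
    _ ≤ ‖a‖ ^ 2 := he.sum_inner_products_le a
    _ = ‖f‖ ^ 2 := by rw [LinearIsometryEquiv.norm_map]

end Orthonormal

theorem Matrix.IsHermitian.inner_toEuclideanLin_self {ι : Type*} [Fintype ι] [DecidableEq ι]
    {N : Matrix ι ι ℝ} (hN : N.IsHermitian) (u : EuclideanSpace ℝ ι) :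
    ⟪u, N.toEuclideanLin u⟫ = ∑ i, hN.eigenvalues i * ⟪hN.eigenvectorBasis i, u⟫ ^ 2 := by
  rw [← hN.eigenvectorBasis.sum_inner_mul_inner]
  refine Finset.sum_congr rfl fun i _ => ?_
  have heig : N.toEuclideanLin (hN.eigenvectorBasis i) =
      hN.eigenvalues i • hN.eigenvectorBasis i := by
    rw [toLpLin_apply, hN.mulVec_eigenvectorBasis]
    rfl
  rw [← (isSymmetric_toEuclideanLin_iff.mpr hN) _ u, heig, real_inner_smul_left,
    real_inner_comm u]
  ring

theorem sum_inner_toEuclideanLin_le_pucciPlus {n : ℕ} {ι : Type*} [Fintype ι]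
    {N : Matrix (Fin n) (Fin n) ℝ} (hN : N.IsHermitian) {c : ℝ} (v : ι → Euc n)
    (hlo : ∀ u : Euc n, ‖u‖ = 1 → c ≤ ∑ k, ⟪u, v k⟫ ^ 2)
    (hup : ∀ u : Euc n, ‖u‖ = 1 → ∑ k, ⟪u, v k⟫ ^ 2 ≤ 1) :
    ∑ k, ⟪v k, N.toEuclideanLin (v k)⟫ ≤ pucciPlus c 1 N := by
  simp_rw [hN.inner_toEuclideanLin_self, pucciPlus, dif_pos hN]
  rw [Finset.sum_comm]
  refine Finset.sum_le_sum fun i _ => ?_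
  have hb : ‖hN.eigenvectorBasis i‖ = 1 := hN.eigenvectorBasis.orthonormal.norm_eq_one i
  rw [← Finset.mul_sum]
  split_ifs with hpos
  · simpa using mul_le_of_le_one_right hpos.le (hup _ hb)
  · rw [mul_comm c]
    exact mul_le_mul_of_nonpos_left (hlo _ hb) (not_lt.mp hpos)

section Hessian

variable {n : ℕ} {s : Set (Euc n)} {φ : Euc n → ℝ} {x : Euc n}

theorem iteratedFDeriv_two_eq_inner_hessWithin (hs : IsOpen s) (hx : x ∈ s) (u u' : Euc n) :
    iteratedFDeriv ℝ 2 φ x ![u, u'] = ⟪u, (hessWithin n s φ x).toEuclideanLin u'⟫ := by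
  have hexp : ∀ y : Euc n, y = ∑ i, y i • EuclideanSpace.single i (1 : ℝ) := fun y => by
    simpa using ((EuclideanSpace.basisFun (Fin n) ℝ).sum_repr y).symm
  rw [iteratedFDeriv_two_apply]
  conv_lhs => rw [hexp u, hexp u']
  simp only [Matrix.cons_val_zero, Matrix.cons_val_one, Matrix.cons_val_fin_one, map_sum,
    map_smul, sum_apply, smul_apply, smul_eq_mul]
  simp only [hessWithin, iteratedFDerivWithin_of_isOpen 2 hs hx, iteratedFDeriv_two_apply,
    Matrix.cons_val_zero, Matrix.cons_val_one, Matrix.cons_val_fin_one, Matrix.toLpLin_apply,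
    PiLp.inner_apply, Matrix.mulVec, dotProduct, Real.inner_apply, Finset.mul_sum]
  rw [Finset.sum_comm]
  exact Finset.sum_congr rfl fun i _ => Finset.sum_congr rfl fun j _ => by ring

theorem isHermitian_hessWithin (hs : IsOpen s) (hφ : ContDiffOn ℝ 2 φ s) (hx : x ∈ s) :
    (hessWithin n s φ x).IsHermitian := by
  have hsymm := (hφ.contDiffAt (hs.mem_nhds hx)).isSymmSndFDerivAt (by simp)
  ext i j
  simp [hessWithin, iteratedFDerivWithin_of_isOpen 2 hs hx, iteratedFDeriv_two_apply, hsymm _ _]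

end Hessian

section Coordinates

variable {n m : ℕ}

def xPartL (n m : ℕ) : Euc (n + m) →L[ℝ] Euc n :=
  LinearMap.toContinuousLinearMap
    { toFun := xPart n m, map_add' := fun _ _ => rfl, map_smul' := fun _ _ => rfl }

def zPartL (n m : ℕ) : Euc (n + m) →L[ℝ] Euc m :=
  LinearMap.toContinuousLinearMap
    { toFun := zPart n m, map_add' := fun _ _ => rfl, map_smul' := fun _ _ => rfl }

@[simp] theorem xPartL_apply (X : Euc (n + m)) : xPartL n m X = xPart n m X := rfl

theorem norm_sq_xPart_add_norm_sq_zPart (X : Euc (n + m)) :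
    ‖xPart n m X‖ ^ 2 + ‖zPart n m X‖ ^ 2 = ‖X‖ ^ 2 := by
  simp [EuclideanSpace.norm_sq_eq, Fin.sum_univ_add, xPart, zPart]

theorem norm_xPart_le (X : Euc (n + m)) : ‖xPart n m X‖ ≤ ‖X‖ := by
  have := norm_sq_xPart_add_norm_sq_zPart X
  nlinarith [norm_nonneg (xPart n m X), norm_nonneg X, sq_nonneg ‖zPart n m X‖]

theorem norm_xPartL_le : ‖xPartL n m‖ ≤ 1 :=
  (xPartL n m).opNorm_le_bound zero_le_one fun X => by simpa using norm_xPart_le X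

/-- `graphResidual A X - b` is the paper's `z - l(x)` for `l(x) = b + A x`. -/
def graphResidual (A : Euc n →L[ℝ] Euc m) : Euc (n + m) →L[ℝ] Euc m :=
  zPartL n m - A.comp (xPartL n m)

@[simp] theorem graphResidual_apply (A : Euc n →L[ℝ] Euc m) (X : Euc (n + m)) :
    graphResidual A X = zPart n m X - A (xPart n m X) := rfl

end Coordinates

section NearlyHorizontal

variable {n m : ℕ} {e : Fin n → Euc (n + m)} {A : Euc n →L[ℝ] Euc m} {K : ℝ}

theorem exists_mem_span_xPart_eq (he : Orthonormal ℝ e) (hA : ‖A‖ ≤ K)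
    (hσ : ∑ k, ‖graphResidual A (e k)‖ ^ 2 ≤ 1 / 4) (u : Euc n) :
    ∃ y ∈ Submodule.span ℝ (range e), xPart n m y = u ∧ ‖y‖ ^ 2 ≤ 4 * (1 + K ^ 2) * ‖u‖ ^ 2 := by
  set V := Submodule.span ℝ (range e)
  have hT : ∀ y ∈ V, ‖graphResidual A y‖ ≤ ‖y‖ / 2 := fun y hy => by
    have := he.norm_sq_apply_le_of_mem_span (graphResidual A).toLinearMap hy
    simp only [ContinuousLinearMap.coe_coe] at this
    nlinarith [norm_nonneg (graphResidual A y), norm_nonneg y]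
  set π : V →ₗ[ℝ] Euc n := (xPartL n m).toLinearMap ∘ₗ V.subtype
  have hinj : Function.Injective π := by
    refine (injective_iff_map_eq_zero π).mpr fun y hy => ?_
    have hx : xPart n m y = 0 := hy
    have hTy := hT y y.2
    have hsplit := norm_sq_xPart_add_norm_sq_zPart (y : Euc (n + m))
    rw [graphResidual_apply, hx, map_zero, sub_zero] at hTy
    rw [hx, norm_zero] at hsplit
    have hsq : ‖zPart n m y‖ ^ 2 ≤ (‖(y : Euc (n + m))‖ / 2) ^ 2 := by gcongr
    have : ‖(y : Euc (n + m))‖ = 0 := by nlinarith [norm_nonneg (y : Euc (n + m))]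
    exact Subtype.ext (norm_eq_zero.mp this)
  have hrank : Module.finrank ℝ V = Module.finrank ℝ (Euc n) := by
    rw [finrank_span_eq_card he.linearIndependent, finrank_euclideanSpace, Fintype.card_fin]
  obtain ⟨y, hy⟩ := (LinearMap.injective_iff_surjective_of_finrank_eq_finrank hrank).mp hinj u
  have hx : xPart n m y = u := hy
  refine ⟨y, y.2, hx, ?_⟩
  have hsplit := norm_sq_xPart_add_norm_sq_zPart (y : Euc (n + m))
  have hz : ‖zPart n m y‖ ≤ ‖(y : Euc (n + m))‖ / 2 + K * ‖u‖ := by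
    have hTy := hT y y.2
    rw [graphResidual_apply, hx] at hTy
    calc ‖zPart n m y‖ ≤ ‖zPart n m y - A u‖ + ‖A u‖ := norm_le_norm_sub_add _ _
      _ ≤ ‖(y : Euc (n + m))‖ / 2 + K * ‖u‖ := add_le_add hTy (A.le_of_opNorm_le hA u)
  rw [hx] at hsplit
  nlinarith [norm_nonneg (zPart n m y), norm_nonneg u, norm_nonneg (y : Euc (n + m)),
    sq_nonneg (‖(y : Euc (n + m))‖ / 2 - K * ‖u‖)]

theorem inv_le_sum_inner_xPart_sq (he : Orthonormal ℝ e) (hA : ‖A‖ ≤ K)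
    (hσ : ∑ k, ‖graphResidual A (e k)‖ ^ 2 ≤ 1 / 4) {u : Euc n} (hu : ‖u‖ = 1) :
    (4 * (1 + K ^ 2))⁻¹ ≤ ∑ k, ⟪u, xPart n m (e k)⟫ ^ 2 := by
  obtain ⟨y, hyV, hyu, hy⟩ := exists_mem_span_xPart_eq he hA hσ u
  have key := he.norm_sq_apply_le_of_mem_span ((innerSL ℝ u).comp (xPartL n m)).toLinearMap hyV
  simp only [ContinuousLinearMap.coe_coe, ContinuousLinearMap.comp_apply, xPartL_apply,
    innerSL_apply_apply, hyu, real_inner_self_eq_norm_sq, hu, Real.norm_eq_abs, sq_abs] at key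
  rw [hu] at hy
  rw [inv_le_iff_one_le_mul₀ (by positivity)]
  nlinarith [Finset.sum_nonneg fun k (_ : k ∈ Finset.univ) => sq_nonneg ⟪u, xPart n m (e k)⟫]

theorem sum_inner_xPart_sq_le (he : Orthonormal ℝ e) (u : Euc n) :
    ∑ k, ⟪u, xPart n m (e k)⟫ ^ 2 ≤ ‖u‖ ^ 2 := by
  have hf : ‖(innerSL ℝ u).comp (xPartL n m)‖ ≤ ‖u‖ :=
    ((innerSL ℝ u).opNorm_comp_le _).trans <| by
      simpa [innerSL_apply_norm] using mul_le_mul_of_nonneg_left norm_xPartL_le (norm_nonneg u)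
  calc ∑ k, ⟪u, xPart n m (e k)⟫ ^ 2 ≤ ‖(innerSL ℝ u).comp (xPartL n m)‖ ^ 2 := by
        simpa using he.sum_sq_apply_le_norm_sq ((innerSL ℝ u).comp (xPartL n m))
    _ ≤ ‖u‖ ^ 2 := by gcongr

end NearlyHorizontal

theorem sum_pos_of_sq_le_of_sum_neg {ι : Type*} [Fintype ι] {r ε : ℝ} {α β q : ι → ℝ}
    (hr : 0 < r) (hε : 0 < ε) (hβ : ∀ k, β k ^ 2 ≤ r ^ 2 * α k ^ 2) (hq : ∑ k, q k < 0) :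
    0 < ∑ k, ((r ^ 2 * α k ^ 2 - β k ^ 2) / r ^ 3 - ε * q k) := by
  rw [Finset.sum_sub_distrib, ← Finset.mul_sum]
  have : 0 ≤ ∑ k, (r ^ 2 * α k ^ 2 - β k ^ 2) / r ^ 3 :=
    Finset.sum_nonneg fun k _ => div_nonneg (sub_nonneg.mpr (hβ k)) (by positivity)
  nlinarith

theorem sum_pos_of_quarter_lt {ι : Type*} [Fintype ι] {r ε : ℝ} {α β q : ι → ℝ}
    (hr : 0 < r) (hrε : r < ε) (hε : ε ≤ (8 * (Fintype.card ι + 1 : ℝ))⁻¹)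
    (hβ : ∀ k, |β k| ≤ r * ε) (hq : ∀ k, q k ≤ 1) (hσ : 1 / 4 < ∑ k, α k ^ 2) :
    0 < ∑ k, ((r ^ 2 * α k ^ 2 - β k ^ 2) / r ^ 3 - ε * q k) := by
  set N : ℝ := (Fintype.card ι : ℝ)
  have hterm : ∀ k, (α k ^ 2 - ε ^ 2) / r - ε ≤ (r ^ 2 * α k ^ 2 - β k ^ 2) / r ^ 3 - ε * q k := by
    intro k
    have hβ2 : β k ^ 2 ≤ (r * ε) ^ 2 := by
      rw [← sq_abs]
      exact pow_le_pow_left₀ (abs_nonneg _) (hβ k) 2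
    have : (α k ^ 2 - ε ^ 2) / r = (r ^ 2 * α k ^ 2 - (r * ε) ^ 2) / r ^ 3 := by
      field_simp
    rw [this]
    gcongr
    exact mul_le_of_le_one_right (hr.trans hrε).le (hq k)
  have hsum : ∑ k, ((α k ^ 2 - ε ^ 2) / r - ε) = (∑ k, α k ^ 2 - N * ε ^ 2) / r - N * ε := by
    rw [Finset.sum_sub_distrib, ← Finset.sum_div, Finset.sum_sub_distrib]
    simp [N]
  have hN : 0 ≤ N := Nat.cast_nonneg _
  have h8 : 8 * (N + 1) * ε ≤ 1 := by
    have := mul_le_mul_of_nonneg_left hε (by positivity : (0 : ℝ) ≤ 8 * (N + 1))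
    rwa [mul_inv_cancel₀ (by positivity)] at this
  have hpos : 0 < (∑ k, α k ^ 2 - N * ε ^ 2) / r - N * ε := by
    rw [sub_pos, lt_div_iff₀ hr]
    nlinarith [mul_le_mul_of_nonneg_left hrε.le (mul_nonneg hN (hr.trans hrε).le)]
  calc 0 < (∑ k, α k ^ 2 - N * ε ^ 2) / r - N * ε := hpos
    _ = ∑ k, ((α k ^ 2 - ε ^ 2) / r - ε) := hsum.symm
    _ ≤ _ := Finset.sum_le_sum fun k _ => hterm k

section C11Bound

variable {n : ℕ} {s : Set (Euc n)} {φ : Euc n → ℝ} {x v : Euc n}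

theorem C11Bound.abs_fderiv_apply_le (h : C11Bound n s φ) (hs : IsOpen s) (hx : x ∈ s)
    (hv : ‖v‖ ≤ 1) : |fderiv ℝ φ x v| ≤ 1 := by
  have h1 := h.2.1 x hx
  rw [fderivWithin_of_isOpen hs hx] at h1
  simpa using (fderiv ℝ φ x).le_of_opNorm_le_of_le h1 hv

theorem C11Bound.iteratedFDeriv_two_apply_le (h : C11Bound n s φ) (hs : IsOpen s) (hx : x ∈ s)
    (hv : ‖v‖ ≤ 1) : iteratedFDeriv ℝ 2 φ x ![v, v] ≤ 1 := by
  have h2 := h.2.2 x hx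
  rw [iteratedFDerivWithin_of_isOpen 2 hs hx] at h2
  have := (iteratedFDeriv ℝ 2 φ x).le_of_opNorm_le h2 ![v, v]
  simp only [Fin.prod_univ_two, Matrix.cons_val_zero, Matrix.cons_val_one, one_mul,
    Real.norm_eq_abs] at this
  nlinarith [le_abs_self (iteratedFDeriv ℝ 2 φ x ![v, v]), norm_nonneg v]

end C11Bound

theorem sum_inner_hess_xPart_neg {n m : ℕ} {e : Fin n → Euc (n + m)} {A : Euc n →L[ℝ] Euc m}
    {K : ℝ} {N : Matrix (Fin n) (Fin n) ℝ} (he : Orthonormal ℝ e) (hA : ‖A‖ ≤ K)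
    (hσ : ∑ k, ‖graphResidual A (e k)‖ ^ 2 ≤ 1 / 4) (hN : N.IsHermitian)
    (hP : pucciPlus (4 * (1 + K ^ 2))⁻¹ 1 N < 0) :
    ∑ k, ⟪xPart n m (e k), N.toEuclideanLin (xPart n m (e k))⟫ < 0 :=
  (sum_inner_toEuclideanLin_le_pucciPlus hN _
    (fun _ hu => inv_le_sum_inner_xPart_sq he hA hσ hu)
    (fun u hu => by simpa [hu] using sum_inner_xPart_sq_le he u)).trans_lt hP

theorem comparison_function_lemma_general (n m : ℕ) (K : ℝ) :
    ∃ c₀ > (0 : ℝ), ∃ ε₀ > (0 : ℝ),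
      ∀ (b : Euc m) (A : Euc n →L[ℝ] Euc m), ‖A‖ ≤ K →
      ∀ ε : ℝ, 0 < ε → ε ≤ ε₀ →
      ∀ φ : Euc n → ℝ, ContDiffOn ℝ 2 φ (ball 0 1) → C11Bound n (ball 0 1) φ →
        (∀ x ∈ ball (0 : Euc n) 1, pucciPlus c₀ 1 (hessWithin n (ball 0 1) φ x) < 0) →
        IsComparison n m
          {X : Euc (n + m) | xPart n m X ∈ ball 0 1 ∧
            0 < ‖zPart n m X - (b + A (xPart n m X))‖ ∧
            ‖zPart n m X - (b + A (xPart n m X))‖ < ε}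
          (fun X => ‖zPart n m X - (b + A (xPart n m X))‖ - ε * φ (xPart n m X)) := by
  refine ⟨(4 * (1 + K ^ 2))⁻¹, by positivity, (8 * ((n : ℝ) + 1))⁻¹, by positivity, ?_⟩
  intro b A hA ε hε hεle φ hφ hC11 hpucci
  simp_rw [sub_add_eq_sub_sub_swap, ← graphResidual_apply, ← xPartL_apply]
  set T := graphResidual A
  have hU : IsOpen {X | xPartL n m X ∈ ball 0 1 ∧ 0 < ‖T X - b‖ ∧ ‖T X - b‖ < ε} :=
    isOpen_setOf_norm_affine_sub_pos_lt isOpen_ball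
  refine ⟨fun X hX => (contDiffAt_norm_affine_sub_comp isOpen_ball hφ
    (norm_pos_iff.mp hX.2.1) hX.1).contDiffWithinAt, ?_⟩
  rintro X hX L - hker e he heon
  obtain ⟨hx, hr, hrε⟩ := hX
  have hw := norm_pos_iff.mp hr
  have hv : ∀ k, ‖xPartL n m (e k)‖ ≤ 1 := fun k => (norm_xPart_le _).trans (heon.norm_eq_one k).le
  simp_rw [iteratedFDerivWithin_of_isOpen 2 hU ⟨hx, hr, hrε⟩,
    iteratedFDeriv_two_norm_affine_sub_comp_apply isOpen_ball hφ hw hx]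
  by_cases hσ : ∑ k, ‖T (e k)‖ ^ 2 ≤ 1 / 4
  · refine sum_pos_of_sq_le_of_sum_neg hr hε (fun k => ?_) ?_
    · rw [← mul_pow, ← sq_abs]
      exact pow_le_pow_left₀ (abs_nonneg _) (abs_real_inner_le_norm _ _) 2
    · simp_rw [iteratedFDeriv_two_eq_inner_hessWithin isOpen_ball hx, xPartL_apply]
      exact sum_inner_hess_xPart_neg heon hA hσ (isHermitian_hessWithin isOpen_ball hφ hx)
        (hpucci _ hx)
  · refine sum_pos_of_quarter_lt hr hrε (by simpa using hεle) (fun k => ?_)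
      (fun k => hC11.iteratedFDeriv_two_apply_le isOpen_ball hx (hv k)) (not_le.mp hσ)
    have hk := hker (e k) (he k)
    rw [fderivWithin_of_isOpen hU ⟨hx, hr, hrε⟩] at hk
    rw [inner_eq_of_fderiv_norm_affine_sub_comp_eq_zero isOpen_ball hφ hw hx hk, abs_mul,
      abs_of_pos hr, abs_mul, abs_of_pos hε]
    gcongr
    exact mul_le_of_le_one_right hε.le (hC11.abs_fderiv_apply_le isOpen_ball hx (hv k))

/-- **Comparison function lemma.** There are `c₀, ε₀ > 0` depending only on `n, m, K` such
that for any affine `l(x) = b + Ax` with `|A| ≤ K`, any `0 < ε ≤ ε₀` and any `C²` function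
`φ` on `B₁ⁿ` with `‖φ‖_{C^{1,1}} ≤ 1` and `M⁺_{c₀,1}(D²φ) < 0` on `B₁ⁿ`, the function
`H(x,z) = |z − l(x)| − εφ(x)` is a comparison function for the minimal surface system in
`{(x,z) : x ∈ B₁ⁿ, 0 < |z − l(x)| < ε}`. -/
theorem comparison_function_lemma (n m : ℕ) (hn : 1 ≤ n) (hm : 1 ≤ m) (K : ℝ) (hK : 0 < K) :
    ∃ c₀ > (0 : ℝ), ∃ ε₀ > (0 : ℝ),
      ∀ (b : Euc m) (A : Euc n →L[ℝ] Euc m), ‖A‖ ≤ K →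
      ∀ ε : ℝ, 0 < ε → ε ≤ ε₀ →
      ∀ φ : Euc n → ℝ, ContDiffOn ℝ 2 φ (ball 0 1) → C11Bound n (ball 0 1) φ →
        (∀ x ∈ ball (0 : Euc n) 1, pucciPlus c₀ 1 (hessWithin n (ball 0 1) φ x) < 0) →
        IsComparison n m
          {X : Euc (n + m) | xPart n m X ∈ ball 0 1 ∧
            0 < ‖zPart n m X - (b + A (xPart n m X))‖ ∧
            ‖zPart n m X - (b + A (xPart n m X))‖ < ε}
          (fun X => ‖zPart n m X - (b + A (xPart n m X))‖ - ε * φ (xPart n m X)) :=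
  comparison_function_lemma_general n m K
end
end
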